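/- arXiv:1809.07933 — 8 statements merged into one kernel-verified Lean document; each statement's English description precedes it below -/
import Mathlib

section
/- In any semi De Morgan algebra, the kernel K with operations α ∪ β := h((e(α) ∨ e(β))''), α ∩ β := h(e(α) ∧ e(β)), 1 := h(⊤), 0 := h(⊥), satisfies the absorption law: α ∪ (α ∩ β) = α for all α, β ∈ K. -/
/-- A semi De Morgan algebra: a bounded distributive lattice with a unary
operation `neg` satisfying (S2)-(S5). -/
class SemiDeMorgan (L : Type*) extends DistribLattice L, BoundedOrder L where
  neg : L → L
  neg_bot : neg ⊥ = ⊤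
  neg_top : neg ⊤ = ⊥
  neg_sup : ∀ a b : L, neg (a ⊔ b) = neg a ⊓ neg b
  neg_neg_inf : ∀ a b : L, neg (neg (a ⊓ b)) = neg (neg a) ⊓ neg (neg b)
  neg_neg_neg : ∀ a : L, neg (neg (neg a)) = neg a

namespace SemiDeMorgan

variable {L : Type*} [SemiDeMorgan L]

/-- The kernel `K = {a'' : a ∈ L}`. -/
abbrev Kernel (L : Type*) [SemiDeMorgan L] : Type _ :=
  {x : L // ∃ a : L, x = neg (neg a)}

/-- `h : L → K`, `a ↦ a''`. -/
def h (a : L) : Kernel L := ⟨neg (neg a), a, rfl⟩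

/-- `e : K → L`, the natural inclusion. -/
def e (α : Kernel L) : L := α.1

/-- `α ∩ β := h (e α ∧ e β)` -/
def kcap (α β : Kernel L) : Kernel L := h (e α ⊓ e β)

/-- `α ∪ β := h ((e α ∨ e β)'')` -/
def kcup (α β : Kernel L) : Kernel L := h (neg (neg (e α ⊔ e β)))

/-- `α* := h ((e α)')` -/
def kstar (α : Kernel L) : Kernel L := h (neg (e α))

/-- `1 := h ⊤` -/
def kone : Kernel L := h (⊤ : L)

/-- `0 := h ⊥` -/
def kzero : Kernel L := h (⊥ : L)

theorem e_injective : Function.Injective (e : Kernel L → L) :=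
  Subtype.val_injective

theorem neg_neg_e (α : Kernel L) : neg (neg (e α)) = e α := by
  obtain ⟨x, a, rfl⟩ := α
  exact congrArg neg (neg_neg_neg a)

theorem e_kcap (α β : Kernel L) : e (kcap α β) = e α ⊓ e β := by
  change neg (neg (e α ⊓ e β)) = _
  rw [neg_neg_inf, neg_neg_e, neg_neg_e]

theorem e_kcup (α β : Kernel L) : e (kcup α β) = neg (neg (e α ⊔ e β)) :=
  congrArg neg (neg_neg_neg _)

/-- Absorption law in the kernel: `α ∪ (α ∩ β) = α`. -/
theorem kernel_absorption (α β : Kernel L) : kcup α (kcap α β) = α := by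
  apply e_injective
  rw [e_kcup, e_kcap, sup_inf_self, neg_neg_e]

end SemiDeMorgan
end

section
/- In any semi De Morgan algebra, the kernel K with the operations ∩ and ∪ defined via h and e satisfies the distributive law: α ∩ (β ∪ γ) = (α ∩ β) ∪ (α ∩ γ) for all α, β, γ ∈ K. -/
namespace SemiDeMorgan

variable {L : Type*} [SemiDeMorgan L]

theorem neg_neg_neg_neg (a : L) : neg (neg (neg (neg a))) = neg (neg a) :=
  neg_neg_neg (neg a)

theorem e_h (a : L) : e (h a) = neg (neg a) := rfl

/-- Distributivity law in the kernel: `α ∩ (β ∪ γ) = (α ∩ β) ∪ (α ∩ γ)`. -/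
theorem kernel_distrib (α β γ : Kernel L) :
    kcap α (kcup β γ) = kcup (kcap α β) (kcap α γ) := by
  apply e_injective
  rw [e_kcap, e_kcup, e_kcup, e_kcap, e_kcap, ← inf_sup_left, neg_neg_inf, neg_neg_e]

end SemiDeMorgan
end

section
/- In any semi De Morgan algebra, the kernel operation α* := h(e(α)') satisfies the De Morgan law (α ∪ β)* = α* ∩ β* for all α, β in the kernel K. -/
namespace SemiDeMorgan

variable {L : Type*} [SemiDeMorgan L]

theorem e_kstar (α : Kernel L) : e (kstar α) = neg (e α) :=
  neg_neg_neg (e α)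

/-- De Morgan law in the kernel: `(α ∪ β)* = α* ∩ β*`. -/
theorem kernel_star_cup (α β : Kernel L) :
    kstar (kcup α β) = kcap (kstar α) (kstar β) :=
  calc kstar (kcup α β) = h (neg (neg (neg (neg (neg (e α ⊔ e β)))))) := rfl
    _ = h (neg (e α) ⊓ neg (e β)) := by rw [neg_neg_neg, neg_neg_neg, neg_sup]
    _ = kcap (kstar α) (kstar β) := by rw [kcap, e_kstar, e_kstar]

end SemiDeMorgan
end

section
/- For any semi De Morgan algebra A, the map h : L → K, a ↦ a'', is a surjective bounded lattice homomorphism from the lattice reduct of A onto the kernel: h(a ∧ b) = h(a) ∩ h(b), h(a ∨ b) = h(a) ∪ h(b), h(⊤) = 1, h(⊥) = 0. -/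
namespace SemiDeMorgan

variable {L : Type*} [SemiDeMorgan L]

theorem h_surjective : Function.Surjective (h : L → Kernel L) := by
  rintro ⟨_, a, rfl⟩
  exact ⟨a, rfl⟩

theorem h_neg_neg (a : L) : h (neg (neg a)) = h a :=
  Subtype.ext (congrArg neg (neg_neg_neg a))

theorem neg_sup_neg_neg (a b : L) : neg (neg (neg a) ⊔ neg (neg b)) = neg (a ⊔ b) := by
  rw [neg_sup, neg_sup, neg_neg_neg, neg_neg_neg]

theorem h_inf (a b : L) : h (a ⊓ b) = kcap (h a) (h b) :=
  calc h (a ⊓ b) = h (neg (neg (a ⊓ b))) := (h_neg_neg _).symm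
    _ = h (neg (neg a) ⊓ neg (neg b)) := by rw [neg_neg_inf]

theorem h_sup (a b : L) : h (a ⊔ b) = kcup (h a) (h b) :=
  calc h (a ⊔ b) = h (neg (neg (a ⊔ b))) := (h_neg_neg _).symm
    _ = h (neg (neg (neg (neg a) ⊔ neg (neg b)))) := by rw [neg_sup_neg_neg]

/-- `h : L → K` is a surjective bounded lattice homomorphism onto the kernel. -/
theorem h_hom :
    Function.Surjective (h : L → Kernel L) ∧
    (∀ a b : L, h (a ⊓ b) = kcap (h a) (h b)) ∧
    (∀ a b : L, h (a ⊔ b) = kcup (h a) (h b)) ∧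
    h (⊤ : L) = kone ∧
    h (⊥ : L) = kzero :=
  ⟨h_surjective, h_inf, h_sup, rfl, rfl⟩

end SemiDeMorgan
end

section
/- If H = (L, D, e, h) is a heterogeneous semi De Morgan algebra, then defining a' := e(h(a)*) on L makes (L, ') a semi De Morgan algebra; i.e., ' satisfies ⊥' = ⊤, ⊤' = ⊥, (a ∨ b)' = a' ∧ b', (a ∧ b)'' = a'' ∧ b'', and a''' = a'. -/
/-! Since `h ∘ e = id` and `*` is an involution, the double negation is `a'' = e (h a)`.
Hence `''` preserves meets because `h` and `e` do, and `a''' = e ((h (e (h a)))*) = a'`;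
the bounds and the join law come straight from the De Morgan laws of `*`. -/

/-- A heterogeneous semi De Morgan algebra `(L, D, e, h)`:
`L` a bounded distributive lattice, `D` a De Morgan algebra (with involution
`star` satisfying the De Morgan laws), `e : D → L` an order embedding
preserving finite meets and the bounds, `h : L → D` a surjective bounded
lattice homomorphism, and `h ∘ e = id`. -/
structure HSMA (L D : Type*) [DistribLattice L] [BoundedOrder L]
    [DistribLattice D] [BoundedOrder D] where
  star : D → D
  star_zero : star ⊥ = ⊤
  star_one : star ⊤ = ⊥
  star_cup : ∀ α β : D, star (α ⊔ β) = star α ⊓ star β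
  star_cap : ∀ α β : D, star (α ⊓ β) = star α ⊔ star β
  star_star : ∀ α : D, star (star α) = α
  e : D → L
  e_le_iff : ∀ α β : D, e α ≤ e β ↔ α ≤ β
  e_cap : ∀ α β : D, e (α ⊓ β) = e α ⊓ e β
  e_one : e ⊤ = ⊤
  e_zero : e ⊥ = ⊥
  h : L → D
  h_surj : Function.Surjective h
  h_inf : ∀ a b : L, h (a ⊓ b) = h a ⊓ h b
  h_sup : ∀ a b : L, h (a ⊔ b) = h a ⊔ h b
  h_top : h ⊤ = ⊤
  h_bot : h ⊥ = ⊥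
  h_e : ∀ α : D, h (e α) = α

variable {L D : Type*} [DistribLattice L] [BoundedOrder L]
  [DistribLattice D] [BoundedOrder D]

/-- The derived semi De Morgan negation on `L`: `a' := e ((h a)*)`. -/
def HSMA.neg (H : HSMA L D) (a : L) : L := H.e (H.star (H.h a))

namespace HSMA

variable (H : HSMA L D)

theorem h_neg (a : L) : H.h (H.neg a) = H.star (H.h a) :=
  H.h_e _

theorem neg_neg (a : L) : H.neg (H.neg a) = H.e (H.h a) := by
  rw [neg, h_neg, star_star]

theorem neg_bot : H.neg ⊥ = ⊤ := by
  rw [neg, h_bot, star_zero, e_one]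

theorem neg_top : H.neg ⊤ = ⊥ := by
  rw [neg, h_top, star_one, e_zero]

theorem neg_sup (a b : L) : H.neg (a ⊔ b) = H.neg a ⊓ H.neg b := by
  rw [neg, h_sup, star_cup, e_cap, neg, neg]

theorem neg_neg_inf (a b : L) :
    H.neg (H.neg (a ⊓ b)) = H.neg (H.neg a) ⊓ H.neg (H.neg b) := by
  rw [neg_neg, neg_neg, neg_neg, h_inf, e_cap]

theorem neg_neg_neg (a : L) : H.neg (H.neg (H.neg a)) = H.neg a := by
  rw [neg_neg, h_neg, neg]

end HSMA

/-- If `H` is a heterogeneous semi De Morgan algebra, then `a' := e ((h a)*)`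
makes `(L, ')` a semi De Morgan algebra. -/
theorem HSMA.neg_isSemiDeMorgan (H : HSMA L D) :
    H.neg ⊥ = ⊤ ∧
    H.neg ⊤ = ⊥ ∧
    (∀ a b : L, H.neg (a ⊔ b) = H.neg a ⊓ H.neg b) ∧
    (∀ a b : L, H.neg (H.neg (a ⊓ b)) = H.neg (H.neg a) ⊓ H.neg (H.neg b)) ∧
    (∀ a : L, H.neg (H.neg (H.neg a)) = H.neg a) :=
  ⟨H.neg_bot, H.neg_top, H.neg_sup, H.neg_neg_inf, H.neg_neg_neg⟩
end

section
/- In any heterogeneous semi De Morgan algebra with a' := e(h(a)*), the identities K2–K6 hold in D: α ∪ β = h((e(α) ∨ e(β))''), α ∩ β = h(e(α) ∧ e(β)), 1 = h(⊤), 0 = h(⊥), and α* = h(e(α)') for all α, β ∈ D. -/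
variable {L D : Type*} [DistribLattice L] [BoundedOrder L]
  [DistribLattice D] [BoundedOrder D]

namespace HSMA

variable (H : HSMA L D)

theorem h_neg_neg (a : L) : H.h (H.neg (H.neg a)) = H.h a := by
  rw [H.h_neg, H.h_neg, H.star_star]

theorem h_e_sup (α β : D) : H.h (H.e α ⊔ H.e β) = α ⊔ β := by
  rw [H.h_sup, H.h_e, H.h_e]

theorem h_e_inf (α β : D) : H.h (H.e α ⊓ H.e β) = α ⊓ β := by
  rw [H.h_inf, H.h_e, H.h_e]

end HSMA

/-- In any HSMA with `a' := e ((h a)*)`, the kernel identities K2–K6 hold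
in `D`. -/
theorem HSMA.kernel_identities (H : HSMA L D) :
    (∀ α β : D, α ⊔ β = H.h (H.neg (H.neg (H.e α ⊔ H.e β)))) ∧
    (∀ α β : D, α ⊓ β = H.h (H.e α ⊓ H.e β)) ∧
    (⊤ : D) = H.h (⊤ : L) ∧
    (⊥ : D) = H.h (⊥ : L) ∧
    (∀ α : D, H.star α = H.h (H.neg (H.e α))) := by
  refine ⟨fun α β => ?_, fun α β => (H.h_e_inf α β).symm, H.h_top.symm, H.h_bot.symm,
    fun α => ?_⟩
  · rw [H.h_neg_neg, H.h_e_sup]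
  · rw [H.h_neg, H.h_e]
end

section
/- If A is an almost pseudocomplemented lattice (an SMA satisfying a ∧ a' = ⊥), then in A⁺ = (L, K, e, h) the identity e(h(a)*) ∧ a = ⊥ holds for all a ∈ L, where α* := h(e(α)'). -/
namespace SemiDeMorgan

variable {L : Type*} [SemiDeMorgan L]

theorem e_kstar_h (a : L) : e (kstar (h a)) = neg a := by
  show neg (neg (neg (neg (neg a)))) = neg a
  rw [neg_neg_neg, neg_neg_neg]

/-- If `A` is an almost pseudocomplemented lattice (`a ∧ a' = ⊥`), then in
`A⁺` the identity `e ((h a)*) ∧ a = ⊥` holds for all `a ∈ L`. -/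
theorem e_kstar_h_inf (hap : ∀ a : L, a ⊓ neg a = ⊥) :
    ∀ a : L, e (kstar (h a)) ⊓ a = ⊥ := by
  intro a
  rw [e_kstar_h, inf_comm, hap]

end SemiDeMorgan
end

section
/- If H = (L, D, e, h) is a heterogeneous semi De Morgan algebra and ' is defined by a' := e(h(a)*), then the map h restricted appropriately yields an isomorphism of De Morgan algebras between D and the kernel K of the induced semi De Morgan algebra (L, '): the order-isomorphism f : D → K given by f = e (corestricted to K = Range(e)) satisfies f(α ∩ β) = f(α) ∩_K f(β), f(α ∪ β) = f(α) ∪_K f(β), and f(α*) = f(α)^{*_K}. -/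
variable {L D : Type*} [DistribLattice L] [BoundedOrder L]
  [DistribLattice D] [BoundedOrder D]

/-- The kernel `K = {a'' : a ∈ L}` of the induced semi De Morgan algebra. -/
def HSMA.Kernel (H : HSMA L D) : Type _ :=
  {x : L // ∃ a : L, x = H.neg (H.neg a)}

/-- `h_K : L → K`, `a ↦ a''`. -/
def HSMA.hK (H : HSMA L D) (a : L) : H.Kernel := ⟨H.neg (H.neg a), a, rfl⟩

/-- `e_K : K → L`, the inclusion. -/
def HSMA.eK (H : HSMA L D) (α : H.Kernel) : L := α.1

/-- `α ∩_K β := h_K (e_K α ∧ e_K β)` -/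
def HSMA.kcap (H : HSMA L D) (α β : H.Kernel) : H.Kernel :=
  H.hK (H.eK α ⊓ H.eK β)

/-- `α ∪_K β := h_K ((e_K α ∨ e_K β)'')` -/
def HSMA.kcup (H : HSMA L D) (α β : H.Kernel) : H.Kernel :=
  H.hK (H.neg (H.neg (H.eK α ⊔ H.eK β)))

/-- `α^{*_K} := h_K ((e_K α)')` -/
def HSMA.kstar (H : HSMA L D) (α : H.Kernel) : H.Kernel :=
  H.hK (H.neg (H.eK α))

/-- `f : D → K`, the corestriction of `e` to the kernel. -/
def HSMA.f (H : HSMA L D) (α : D) : H.Kernel := H.hK (H.e α)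

/-!
Since `h ∘ e = id`, the double negation is `a'' = e (h a)`: the kernel is the range of `e` and
`h_K = e ∘ h`. Evaluated on elements `e α`, each kernel operation is therefore `e` applied to
the `h`-image of the corresponding operation of `L`, and `h` is a lattice homomorphism
undoing `e`.
-/

namespace HSMA

variable (H : HSMA L D)

theorem e_injective : Function.Injective H.e := fun α β hαβ =>
  le_antisymm ((H.e_le_iff α β).mp hαβ.le) ((H.e_le_iff β α).mp hαβ.ge)

theorem neg_e (α : D) : H.neg (H.e α) = H.e (H.star α) := by
  rw [neg, H.h_e]

theorem eK_injective : Function.Injective H.eK := Subtype.val_injective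

theorem eK_hK (a : L) : H.eK (H.hK a) = H.e (H.h a) :=
  H.neg_neg a

theorem eK_f (α : D) : H.eK (H.f α) = H.e α := by
  rw [f, eK_hK, H.h_e]

theorem f_injective : Function.Injective H.f := fun α β hαβ =>
  H.e_injective <| by rw [← H.eK_f, ← H.eK_f, hαβ]

theorem f_surjective : Function.Surjective H.f := by
  rintro ⟨_, a, rfl⟩
  exact ⟨H.h a, H.eK_injective ((H.eK_f _).trans (H.neg_neg a).symm)⟩

theorem eK_f_le_eK_f_iff (α β : D) : H.eK (H.f α) ≤ H.eK (H.f β) ↔ α ≤ β := by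
  rw [eK_f, eK_f, H.e_le_iff]

theorem f_inf (α β : D) : H.f (α ⊓ β) = H.kcap (H.f α) (H.f β) :=
  H.eK_injective <| by rw [kcap, eK_hK, eK_f, eK_f, eK_f, H.h_inf, H.h_e, H.h_e]

theorem f_sup (α β : D) : H.f (α ⊔ β) = H.kcup (H.f α) (H.f β) :=
  H.eK_injective <| by rw [kcup, eK_hK, neg_neg, H.h_e, eK_f, eK_f, eK_f, H.h_sup, H.h_e, H.h_e]

theorem f_star (α : D) : H.f (H.star α) = H.kstar (H.f α) :=
  H.eK_injective <| by rw [kstar, eK_hK, eK_f, eK_f, neg_e, H.h_e]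

end HSMA

/-- `f : D → K` is an order-isomorphism of De Morgan algebras between `D` and
the kernel of the induced semi De Morgan algebra: `f` is `e` corestricted to
`K = Range e`, is bijective, reflects and preserves order, and preserves
`∩`, `∪` and `*`. -/
theorem HSMA.f_isDeMorganIso (H : HSMA L D) :
    (∀ α : D, H.eK (H.f α) = H.e α) ∧
    Function.Bijective H.f ∧
    (∀ α β : D, H.eK (H.f α) ≤ H.eK (H.f β) ↔ α ≤ β) ∧
    (∀ α β : D, H.f (α ⊓ β) = H.kcap (H.f α) (H.f β)) ∧
    (∀ α β : D, H.f (α ⊔ β) = H.kcup (H.f α) (H.f β)) ∧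
    (∀ α : D, H.f (H.star α) = H.kstar (H.f α)) :=
  ⟨H.eK_f, ⟨H.f_injective, H.f_surjective⟩, H.eK_f_le_eK_f_iff, H.f_inf, H.f_sup, H.f_star⟩
end
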